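/- Let (M, λ_i) be an AP-space on ℝⁿ (n ≥ 2) and let λ̄_i = e^{−ρ} λ_i be a conformal change with smooth conformal factor ρ. Then the curvature tensors R̂ of the symmetric parts Γ̂ of the Weitzenböck connections are related by R̂̄^α_{μνσ} = R̂^α_{μνσ} + ½ U_{νσ}{ δ^α_σ ρ_{μ ĥ|ν} + ½ δ^α_ν ρ_σ ρ_μ }, where ρ_{μ ĥ|ν} := ∂_ν ρ_μ − Γ̂^ε_{μν} ρ_ε and ρ_μ := ∂ρ/∂x^μ. -/

import Mathlib

open scoped BigOperators

noncomputable section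

/-- Kronecker delta as a real number. -/
def kron {n : ℕ} (α μ : Fin n) : ℝ := if α = μ then 1 else 0

/-- Partial derivative `∂_ν f` of a scalar function on ℝⁿ. -/
def pd {n : ℕ} (ν : Fin n) (f : (Fin n → ℝ) → ℝ) (x : Fin n → ℝ) : ℝ :=
  fderiv ℝ f x (Pi.single ν 1)

/-- Weitzenböck connection `Γ^α_{μν} = Σ_i λ_i^α ∂_ν λ_{i,μ}`. -/
def Wconn {n : ℕ} (lam lamCov : Fin n → (Fin n → ℝ) → Fin n → ℝ)
    (α μ ν : Fin n) (x : Fin n → ℝ) : ℝ :=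
  ∑ i, lam i x α * pd ν (fun y => lamCov i y μ) x

/-- Torsion `Λ^α_{μν}` of the Weitzenböck connection. -/
def tors {n : ℕ} (lam lamCov : Fin n → (Fin n → ℝ) → Fin n → ℝ)
    (α μ ν : Fin n) (x : Fin n → ℝ) : ℝ :=
  Wconn lam lamCov α μ ν x - Wconn lam lamCov α ν μ x

/-- Contracted torsion (basic vector) `C_μ = Λ^ε_{εμ}`. -/
def Cvec {n : ℕ} (lam lamCov : Fin n → (Fin n → ℝ) → Fin n → ℝ)
    (μ : Fin n) (x : Fin n → ℝ) : ℝ :=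
  ∑ ε, tors lam lamCov ε ε μ x

/-- Metric `g_{μν} = Σ_i λ_{i,μ} λ_{i,ν}`. -/
def gmet {n : ℕ} (lamCov : Fin n → (Fin n → ℝ) → Fin n → ℝ)
    (μ ν : Fin n) (x : Fin n → ℝ) : ℝ :=
  ∑ i, lamCov i x μ * lamCov i x ν

/-- Inverse metric `g^{μν} = Σ_i λ_i^μ λ_i^ν`. -/
def ginv {n : ℕ} (lam : Fin n → (Fin n → ℝ) → Fin n → ℝ)
    (μ ν : Fin n) (x : Fin n → ℝ) : ℝ :=
  ∑ i, lam i x μ * lam i x ν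

/-- Levi-Civita connection (Christoffel symbols) of the metric `g`. -/
def LC {n : ℕ} (lam lamCov : Fin n → (Fin n → ℝ) → Fin n → ℝ)
    (α μ ν : Fin n) (x : Fin n → ℝ) : ℝ :=
  (1/2) * ∑ ε, ginv lam α ε x *
    (pd μ (fun y => gmet lamCov ε ν y) x + pd ν (fun y => gmet lamCov ε μ y) x
      - pd ε (fun y => gmet lamCov μ ν y) x)

/-- Curvature tensor `R[A]^α_{μνσ}` of connection coefficients `A`. -/
def curv {n : ℕ} (A : Fin n → Fin n → Fin n → (Fin n → ℝ) → ℝ)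
    (α μ ν σ : Fin n) (x : Fin n → ℝ) : ℝ :=
  pd ν (A α μ σ) x - pd σ (A α μ ν) x
    + ∑ ε, A ε μ σ x * A α ε ν x - ∑ ε, A ε μ ν x * A α ε σ x

/-- Conformal change of the contravariant components: `λ̄_i^μ = e^{-ρ} λ_i^μ`. -/
def confLam {n : ℕ} (ρ : (Fin n → ℝ) → ℝ) (lam : Fin n → (Fin n → ℝ) → Fin n → ℝ) :
    Fin n → (Fin n → ℝ) → Fin n → ℝ :=
  fun i x μ => Real.exp (-(ρ x)) * lam i x μ

/-- Conformal change of the covariant components: `λ̄_{i,μ} = e^{ρ} λ_{i,μ}`. -/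
def confLamCov {n : ℕ} (ρ : (Fin n → ℝ) → ℝ) (lamCov : Fin n → (Fin n → ℝ) → Fin n → ℝ) :
    Fin n → (Fin n → ℝ) → Fin n → ℝ :=
  fun i x μ => Real.exp (ρ x) * lamCov i x μ

/-- `ρ^α := g^{αε} ρ_ε`. -/
def rhoUp {n : ℕ} (lam : Fin n → (Fin n → ℝ) → Fin n → ℝ) (ρ : (Fin n → ℝ) → ℝ)
    (α : Fin n) (x : Fin n → ℝ) : ℝ :=
  ∑ ε, ginv lam α ε x * pd ε ρ x

/-- `ρ² := ρ^ε ρ_ε`. -/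
def rhoSq {n : ℕ} (lam : Fin n → (Fin n → ℝ) → Fin n → ℝ) (ρ : (Fin n → ℝ) → ℝ)
    (x : Fin n → ℝ) : ℝ :=
  ∑ ε, rhoUp lam ρ ε x * pd ε ρ x

/-- Covariant derivative of a covector field: `X_{μ|ν} = ∂_ν X_μ − A^ε_{μν} X_ε`. -/
def covD {n : ℕ} (A : Fin n → Fin n → Fin n → (Fin n → ℝ) → ℝ)
    (X : Fin n → (Fin n → ℝ) → ℝ) (μ ν : Fin n) (x : Fin n → ℝ) : ℝ :=
  pd ν (X μ) x - ∑ ε, A ε μ ν x * X ε x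

/-- Covariant derivative of a vector field: `X^α_{|ν} = ∂_ν X^α + A^α_{εν} X^ε`. -/
def covDUp {n : ℕ} (A : Fin n → Fin n → Fin n → (Fin n → ℝ) → ℝ)
    (X : Fin n → (Fin n → ℝ) → ℝ) (α ν : Fin n) (x : Fin n → ℝ) : ℝ :=
  pd ν (X α) x + ∑ ε, A α ε ν x * X ε x

/-- Symmetric part `Γ̂^α_{μν}` of the Weitzenböck connection. -/
def symW {n : ℕ} (lam lamCov : Fin n → (Fin n → ℝ) → Fin n → ℝ)
    (α μ ν : Fin n) (x : Fin n → ℝ) : ℝ :=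
  (1/2) * (Wconn lam lamCov α μ ν x + Wconn lam lamCov α ν μ x)

/-- The conformally invariant tensor `T^α_{μν}`. -/
def Ttens {n : ℕ} (lam lamCov : Fin n → (Fin n → ℝ) → Fin n → ℝ)
    (α μ ν : Fin n) (x : Fin n → ℝ) : ℝ :=
  tors lam lamCov α μ ν x
    - ((n : ℝ) - 1)⁻¹ * (kron α μ * Cvec lam lamCov ν x - kron α ν * Cvec lam lamCov μ x)

/-- The conformally invariant tensor `K^α_{μνσ}`. -/
def Ktens {n : ℕ} (lam lamCov : Fin n → (Fin n → ℝ) → Fin n → ℝ)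
    (α μ ν σ : Fin n) (x : Fin n → ℝ) : ℝ :=
  ((n : ℝ) - 1)⁻¹ *
    (kron α μ * pd σ (Cvec lam lamCov ν) x - kron α μ * pd ν (Cvec lam lamCov σ) x)

/-- The conformal connection `𝚪^α_{μν} = Γ^α_{μν} − (1/(n−1)) δ^α_μ C_ν`. -/
def bConn {n : ℕ} (lam lamCov : Fin n → (Fin n → ℝ) → Fin n → ℝ)
    (α μ ν : Fin n) (x : Fin n → ℝ) : ℝ :=
  Wconn lam lamCov α μ ν x - ((n : ℝ) - 1)⁻¹ * (kron α μ * Cvec lam lamCov ν x)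

/-- The conformal connection `𝚪̂^α_{μν} = Γ̂^α_{μν} − (1/(2(n−1)))(δ^α_μ C_ν + δ^α_ν C_μ)`. -/
def hatConn {n : ℕ} (lam lamCov : Fin n → (Fin n → ℝ) → Fin n → ℝ)
    (α μ ν : Fin n) (x : Fin n → ℝ) : ℝ :=
  symW lam lamCov α μ ν x
    - (2 * ((n : ℝ) - 1))⁻¹ * (kron α μ * Cvec lam lamCov ν x + kron α ν * Cvec lam lamCov μ x)

/-- `C_{μ ĥ|ν}`: covariant derivative of `C` with respect to `Γ̂`. -/
def Chat {n : ℕ} (lam lamCov : Fin n → (Fin n → ℝ) → Fin n → ℝ)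
    (μ ν : Fin n) (x : Fin n → ℝ) : ℝ :=
  covD (symW lam lamCov) (Cvec lam lamCov) μ ν x

/-- The conformally invariant tensor `B^α_{μνσ}`. -/
def Btens {n : ℕ} (lam lamCov : Fin n → (Fin n → ℝ) → Fin n → ℝ)
    (α μ ν σ : Fin n) (x : Fin n → ℝ) : ℝ :=
  curv (symW lam lamCov) α μ ν σ x
    - (2 * ((n : ℝ) - 1))⁻¹ *
      (kron α μ * pd ν (Cvec lam lamCov σ) x - kron α μ * pd σ (Cvec lam lamCov ν) x
        + kron α σ * Chat lam lamCov μ ν x - kron α ν * Chat lam lamCov μ σ x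
        - (2 * ((n : ℝ) - 1))⁻¹ * kron α ν * Cvec lam lamCov μ x * Cvec lam lamCov σ x
        + (2 * ((n : ℝ) - 1))⁻¹ * kron α σ * Cvec lam lamCov μ x * Cvec lam lamCov ν x)

/-- `C^σ := g^{σε} C_ε`. -/
def Cup {n : ℕ} (lam lamCov : Fin n → (Fin n → ℝ) → Fin n → ℝ)
    (σ : Fin n) (x : Fin n → ℝ) : ℝ :=
  ∑ ε, ginv lam σ ε x * Cvec lam lamCov ε x

/-- `C² := C_ε C^ε = g^{εη} C_ε C_η`. -/
def Csq {n : ℕ} (lam lamCov : Fin n → (Fin n → ℝ) → Fin n → ℝ)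
    (x : Fin n → ℝ) : ℝ :=
  ∑ ε, Cvec lam lamCov ε x * Cup lam lamCov ε x

/-- The tensor `S_{μν} := ρ_{μ;ν} − ρ_μ ρ_ν − ½ g_{μν} ρ²`. -/
def Stens {n : ℕ} (lam lamCov : Fin n → (Fin n → ℝ) → Fin n → ℝ)
    (ρ : (Fin n → ℝ) → ℝ) (μ ν : Fin n) (x : Fin n → ℝ) : ℝ :=
  covD (LC lam lamCov) (fun μ => pd μ ρ) μ ν x
    - pd μ ρ x * pd ν ρ x - (1/2) * gmet lamCov μ ν x * rhoSq lam ρ x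

/-- The conformal connection `𝚪°^α_{μν} = Γ°^α_{μν} − (1/(n−1))(δ^α_μ C_ν + δ^α_ν C_μ − g_{μν} C^α)`. -/
def oConn {n : ℕ} (lam lamCov : Fin n → (Fin n → ℝ) → Fin n → ℝ)
    (α μ ν : Fin n) (x : Fin n → ℝ) : ℝ :=
  LC lam lamCov α μ ν x
    - ((n : ℝ) - 1)⁻¹ *
      (kron α μ * Cvec lam lamCov ν x + kron α ν * Cvec lam lamCov μ x
        - gmet lamCov μ ν x * Cup lam lamCov α x)

end

section Helpers
variable {n : ℕ}

lemma pd_contDiff {f : (Fin n → ℝ) → ℝ} (hf : ContDiff ℝ (⊤ : ℕ∞) f) (ν : Fin n) :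
    ContDiff ℝ (⊤ : ℕ∞) (pd ν f) :=
  (hf.fderiv_right ((by simp))).clm_apply contDiff_const

lemma pd_comm {ρ : (Fin n → ℝ) → ℝ} (hρ : ContDiff ℝ (⊤ : ℕ∞) ρ) (ν σ : Fin n) (x : Fin n → ℝ) :
    pd ν (pd σ ρ) x = pd σ (pd ν ρ) x := by
  have hsymm : IsSymmSndFDerivAt ℝ ρ x := hρ.contDiffAt.isSymmSndFDerivAt (by rw [minSmoothness_of_isRCLikeNormedField]; exact WithTop.coe_le_coe.mpr le_top)
  have hd : DifferentiableAt ℝ (fderiv ℝ ρ) x :=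
    ((hρ.fderiv_right (m := 1) (WithTop.coe_le_coe.mpr le_top)).differentiable one_ne_zero) x
  have key : ∀ v w : Fin n → ℝ, fderiv ℝ (fun y => fderiv ℝ ρ y w) x v
      = fderiv ℝ (fderiv ℝ ρ) x v w := by
    intro v w
    rw [fderiv_clm_apply hd (differentiableAt_const w)]
    simp
  unfold pd
  rw [key, key, hsymm.eq]

lemma pd_add {f g : (Fin n → ℝ) → ℝ} {x : Fin n → ℝ} (hf : DifferentiableAt ℝ f x)
    (hg : DifferentiableAt ℝ g x) (ν : Fin n) :
    pd ν (fun y => f y + g y) x = pd ν f x + pd ν g x := by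
  unfold pd; rw [fderiv_fun_add hf hg]; simp

lemma pd_const_mul {f : (Fin n → ℝ) → ℝ} {x : Fin n → ℝ} (hf : DifferentiableAt ℝ f x)
    (c : ℝ) (ν : Fin n) :
    pd ν (fun y => c * f y) x = c * pd ν f x := by
  unfold pd; rw [fderiv_const_mul hf]; simp

lemma pd_mul {f g : (Fin n → ℝ) → ℝ} {x : Fin n → ℝ} (hf : DifferentiableAt ℝ f x)
    (hg : DifferentiableAt ℝ g x) (ν : Fin n) :
    pd ν (fun y => f y * g y) x = f x * pd ν g x + g x * pd ν f x := by
  unfold pd; rw [fderiv_fun_mul hf hg]; simp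

lemma pd_exp {ρ : (Fin n → ℝ) → ℝ} {x : Fin n → ℝ} (hρ : DifferentiableAt ℝ ρ x) (ν : Fin n) :
    pd ν (fun y => Real.exp (ρ y)) x = Real.exp (ρ x) * pd ν ρ x := by
  unfold pd; rw [fderiv_exp hρ]; simp

lemma sum_kron_left (μ : Fin n) (f : Fin n → ℝ) : ∑ ε, kron ε μ * f ε = f μ := by
  simp [kron, ite_mul]

lemma sum_kron_right (μ : Fin n) (f : Fin n → ℝ) : ∑ ε, kron μ ε * f ε = f μ := by
  simp [kron, ite_mul]

end Helpers

section ConfLemmas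
variable {n : ℕ}

lemma wconn_contDiff (lam lamCov : Fin n → (Fin n → ℝ) → Fin n → ℝ)
    (hlam : ∀ i μ, ContDiff ℝ (⊤ : ℕ∞) fun x => lam i x μ)
    (hlamCov : ∀ i μ, ContDiff ℝ (⊤ : ℕ∞) fun x => lamCov i x μ)
    (α μ ν : Fin n) :
    ContDiff ℝ (⊤ : ℕ∞) (fun x => Wconn lam lamCov α μ ν x) := by
  unfold Wconn
  exact ContDiff.sum fun i _ => (hlam i α).mul (pd_contDiff (hlamCov i μ) ν)

lemma symW_contDiff (lam lamCov : Fin n → (Fin n → ℝ) → Fin n → ℝ)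
    (hlam : ∀ i μ, ContDiff ℝ (⊤ : ℕ∞) fun x => lam i x μ)
    (hlamCov : ∀ i μ, ContDiff ℝ (⊤ : ℕ∞) fun x => lamCov i x μ)
    (α μ ν : Fin n) :
    ContDiff ℝ (⊤ : ℕ∞) (fun x => symW lam lamCov α μ ν x) := by
  unfold symW
  exact contDiff_const.mul ((wconn_contDiff lam lamCov hlam hlamCov α μ ν).add
      (wconn_contDiff lam lamCov hlam hlamCov α ν μ))

lemma wconn_conf (lam lamCov : Fin n → (Fin n → ℝ) → Fin n → ℝ)
    (hlamCov : ∀ i μ, ContDiff ℝ (⊤ : ℕ∞) fun x => lamCov i x μ)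
    (ρ : (Fin n → ℝ) → ℝ) (hρ : ContDiff ℝ (⊤ : ℕ∞) ρ)
    (hinv : ∀ (x : Fin n → ℝ) (μ ν : Fin n), ∑ i, lam i x μ * lamCov i x ν = kron μ ν)
    (α μ ν : Fin n) (x : Fin n → ℝ) :
    Wconn (confLam ρ lam) (confLamCov ρ lamCov) α μ ν x
      = Wconn lam lamCov α μ ν x + kron α μ * pd ν ρ x := by
  have hpd : ∀ i : Fin n, pd ν (fun y => Real.exp (ρ y) * lamCov i y μ) x
      = Real.exp (ρ x) * pd ν (fun y => lamCov i y μ) x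
        + lamCov i x μ * (Real.exp (ρ x) * pd ν ρ x) := by
    intro i
    rw [pd_mul ((hρ.differentiable (by simp) x).exp)
      ((hlamCov i μ).differentiable (by simp) x) ν, pd_exp ((hρ.differentiable (by simp)) x)]
  have hexp : Real.exp (-(ρ x)) * Real.exp (ρ x) = 1 := by
    rw [← Real.exp_add]; simp
  unfold Wconn confLam confLamCov
  simp only [hpd]
  rw [← hinv x α μ, Finset.sum_mul, ← Finset.sum_add_distrib]
  refine Finset.sum_congr rfl fun i _ => ?_
  set L := lam i x α; set G := lamCov i x μ
  set P := pd ν (fun y => lamCov i y μ) x; set b := pd ν ρ x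
  linear_combination (L * P + L * G * b) * hexp

lemma symW_conf (lam lamCov : Fin n → (Fin n → ℝ) → Fin n → ℝ)
    (hlamCov : ∀ i μ, ContDiff ℝ (⊤ : ℕ∞) fun x => lamCov i x μ)
    (ρ : (Fin n → ℝ) → ℝ) (hρ : ContDiff ℝ (⊤ : ℕ∞) ρ)
    (hinv : ∀ (x : Fin n → ℝ) (μ ν : Fin n), ∑ i, lam i x μ * lamCov i x ν = kron μ ν)
    (α μ ν : Fin n) :
    symW (confLam ρ lam) (confLamCov ρ lamCov) α μ ν
      = fun x => symW lam lamCov α μ ν x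
          + (1/2) * (kron α μ * pd ν ρ x + kron α ν * pd μ ρ x) := by
  funext x
  unfold symW
  rw [wconn_conf lam lamCov hlamCov ρ hρ hinv α μ ν x,
      wconn_conf lam lamCov hlamCov ρ hρ hinv α ν μ x]
  ring

end ConfLemmas

theorem symW_curvature_conformal_change
    {n : ℕ} (hn : 2 ≤ n)
    (lam lamCov : Fin n → (Fin n → ℝ) → Fin n → ℝ)
    (hlam : ∀ i μ, ContDiff ℝ (⊤ : ℕ∞) fun x => lam i x μ)
    (hlamCov : ∀ i μ, ContDiff ℝ (⊤ : ℕ∞) fun x => lamCov i x μ)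
    (hinv : ∀ (x : Fin n → ℝ) (μ ν : Fin n), ∑ i, lam i x μ * lamCov i x ν = kron μ ν)
    (hinv' : ∀ (x : Fin n → ℝ) (i j : Fin n), ∑ μ, lam i x μ * lamCov j x μ = kron i j)
    (ρ : (Fin n → ℝ) → ℝ) (hρ : ContDiff ℝ (⊤ : ℕ∞) ρ)
    :
    ∀ (x : Fin n → ℝ) (α μ ν σ : Fin n),
      curv (symW (confLam ρ lam) (confLamCov ρ lamCov)) α μ ν σ x
        = curv (symW lam lamCov) α μ ν σ x
          + (1/2) *
            ((kron α σ * covD (symW lam lamCov) (fun μ => pd μ ρ) μ ν x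
                + (1/2) * kron α ν * pd σ ρ x * pd μ ρ x)
              - (kron α ν * covD (symW lam lamCov) (fun μ => pd μ ρ) μ σ x
                + (1/2) * kron α σ * pd ν ρ x * pd μ ρ x)) := by
  intro x α μ ν σ
  have hS := symW_conf lam lamCov hlamCov ρ hρ hinv
  have hbd : ∀ τ : Fin n, DifferentiableAt ℝ (pd τ ρ) x :=
    fun τ => ((pd_contDiff hρ τ).differentiable (by simp)) x
  have key : ∀ (τ p q : Fin n) (c1 c2 : ℝ) (F : (Fin n → ℝ) → ℝ),
      DifferentiableAt ℝ F x →
      pd τ (fun y => F y + (1/2) * (c1 * pd p ρ y + c2 * pd q ρ y)) x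
        = pd τ F x + (1/2) * (c1 * pd τ (pd p ρ) x + c2 * pd τ (pd q ρ) x) := by
    intro τ p q c1 c2 F hF
    rw [pd_add hF (by
        exact (((hbd p).const_mul c1).add ((hbd q).const_mul c2)).const_mul (1/2)),
      pd_const_mul (((hbd p).const_mul c1).fun_add ((hbd q).const_mul c2)),
      pd_add ((hbd p).const_mul c1) ((hbd q).const_mul c2),
      pd_const_mul (hbd p), pd_const_mul (hbd q)]
  have hFd : ∀ a m v : Fin n, DifferentiableAt ℝ (symW lam lamCov a m v) x :=
    fun a m v => ((symW_contDiff lam lamCov hlam hlamCov a m v).differentiable (by simp)) x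
  have sum_eq : ∀ s t : Fin n,
      (∑ ε, (symW lam lamCov ε μ s x + 1/2 * (kron ε μ * pd s ρ x + kron ε s * pd μ ρ x))
          * (symW lam lamCov α ε t x + 1/2 * (kron α ε * pd t ρ x + kron α t * pd ε ρ x)))
      = ∑ ε, symW lam lamCov ε μ s x * symW lam lamCov α ε t x
        + (1/2) * kron α t * ∑ ε, symW lam lamCov ε μ s x * pd ε ρ x
        + (1/2) * pd t ρ x * symW lam lamCov α μ s x
        + (1/2) * pd s ρ x * symW lam lamCov α μ t x
        + (1/2) * pd μ ρ x * symW lam lamCov α s t x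
        + (1/4) * kron α μ * pd s ρ x * pd t ρ x
        + (1/2) * kron α t * pd s ρ x * pd μ ρ x
        + (1/4) * kron α s * pd μ ρ x * pd t ρ x := by
    intro s t
    have step : ∀ ε : Fin n,
        (symW lam lamCov ε μ s x + 1/2 * (kron ε μ * pd s ρ x + kron ε s * pd μ ρ x))
          * (symW lam lamCov α ε t x + 1/2 * (kron α ε * pd t ρ x + kron α t * pd ε ρ x))
        = (symW lam lamCov ε μ s x * symW lam lamCov α ε t x
            + (1/2) * kron α t * (symW lam lamCov ε μ s x * pd ε ρ x))
          + kron α ε * ((1/2) * pd t ρ x * symW lam lamCov ε μ s x)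
          + kron ε μ * ((1/2) * pd s ρ x * symW lam lamCov α ε t x
              + (1/4) * pd s ρ x * pd t ρ x * kron α ε
              + (1/4) * pd s ρ x * kron α t * pd ε ρ x)
          + kron ε s * ((1/2) * pd μ ρ x * symW lam lamCov α ε t x
              + (1/4) * pd μ ρ x * pd t ρ x * kron α ε
              + (1/4) * pd μ ρ x * kron α t * pd ε ρ x) := fun ε => by ring
    rw [Finset.sum_congr rfl (fun ε _ => step ε)]
    rw [Finset.sum_add_distrib, Finset.sum_add_distrib, Finset.sum_add_distrib,
      Finset.sum_add_distrib, sum_kron_left, sum_kron_left, sum_kron_right,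
      ← Finset.mul_sum]
    ring
  simp only [curv, hS]
  rw [key ν σ μ (kron α μ) (kron α σ) (symW lam lamCov α μ σ) (hFd α μ σ),
      key σ ν μ (kron α μ) (kron α ν) (symW lam lamCov α μ ν) (hFd α μ ν),
      sum_eq σ ν, sum_eq ν σ,
      ← pd_comm hρ ν σ x,
      show symW lam lamCov α σ ν x = symW lam lamCov α ν σ x by unfold symW; ring]
  simp only [covD]
  ring
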